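/- Let 𝕃(λ) be the 2×2 matrix with entries 𝕃₁₁ = −p₂λ − p₁ − q₁p₂, 𝕃₁₂ = λ² + q₁λ + q₂, 𝕃₂₁ = λ³ − q₁λ² + (q₁²−q₂)λ − p₂² − q₁³ + 2q₁q₂ + c, 𝕃₂₂ = −𝕃₁₁. Then det(𝕃(λ) − μ·I) = 0 is equivalent to λ⁵ + cλ² + H₁λ + H₂ = μ², where H₁ = 2p₁p₂ + q₁p₂² − q₁⁴ − q₂² + 3q₁²q₂ + cq₁ and H₂ = p₁² + (q₁²−q₂)p₂² + 2q₁p₁p₂ − q₁³q₂ + 2q₁q₂² + cq₂. -/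
import Mathlib

open Matrix

/-- Lax matrix of the first Stäckel representation of the n=2 stationary KdV system. -/
noncomputable def Lax (c q1 q2 p1 p2 lam : ℝ) : Matrix (Fin 2) (Fin 2) ℝ :=
  !![-p2*lam - p1 - q1*p2, lam^2 + q1*lam + q2;
     lam^3 - q1*lam^2 + (q1^2 - q2)*lam - p2^2 - q1^3 + 2*q1*q2 + c,
     -(-p2*lam - p1 - q1*p2)]

theorem stmt3 (c q1 q2 p1 p2 : ℝ) :
    ∀ lam mu : ℝ,
      (Lax c q1 q2 p1 p2 lam - mu • (1 : Matrix (Fin 2) (Fin 2) ℝ)).det = 0 ↔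
      lam^5 + c*lam^2
        + (2*p1*p2 + q1*p2^2 - q1^4 - q2^2 + 3*q1^2*q2 + c*q1) * lam
        + (p1^2 + (q1^2 - q2)*p2^2 + 2*q1*p1*p2 - q1^3*q2 + 2*q1*q2^2 + c*q2)
      = mu^2 := by
  intro lam mu
  simp only [Lax, det_fin_two, Matrix.sub_apply, Matrix.smul_apply, Matrix.one_apply,
    Matrix.cons_val', Matrix.cons_val_zero, Matrix.cons_val_one, Matrix.head_cons,
    Matrix.empty_val', Matrix.cons_val_fin_one, Matrix.head_fin_const]
  norm_num
  constructor <;> intro h <;> nlinarith [h]
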